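/- arXiv:2201.02559 — 9 statements merged into one kernel-verified Lean document; each statement's English description precedes it below -/
import Mathlib

section
/- Fix n ≥ 1. Let V be the subgroup of the group of all permutations of ℕ consisting of permutations σ with σ(i) = i for every i < n, and let f be the involution of ℕ defined by f(i) = n + i for i < n, f(i) = i − n for n ≤ i < 2n, and f(i) = i for i ≥ 2n. Then every permutation φ of ℕ can be written as φ = v₁ ∘ f ∘ v₂ ∘ f ∘ v₃ with v₁, v₂, v₃ ∈ V. (This is the algebraic core of the proof that the group S_∞ of all bijections of a countable set is coarsely bounded.) -/
/-!
Since `v₃` ranges over all of `V`, it suffices to find `v₁, v₂ ∈ V` with `v₁ f v₂ f = φ` on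
`{0, …, n-1}` and to put `v₃ := (v₁ f v₂ f)⁻¹ φ`. This prescribes `v₁` and `v₂` only at finitely
many points of `[n, ∞)`, injectively and with values in `[n, ∞)`; as `[n, ∞)` is infinite, every
such prescription extends to a permutation of `[n, ∞)`, i.e. to an element of `V`.
-/

open Function

theorem Equiv.Perm.exists_apply_embedding_eq {α ι : Type*} [Infinite α] [Finite ι] (a b : ι ↪ α) :
    ∃ g : Equiv.Perm α, ∀ i, g (a i) = b i := by
  let f : Set.range a ↪ α := (Equiv.ofInjective a a.injective).symm.toEmbedding.trans b
  have hs : Cardinal.mk (Set.range a) < Cardinal.mk α :=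
    (Set.finite_range a).lt_aleph0.trans_le (Cardinal.aleph0_le_mk α)
  obtain ⟨g, hg⟩ := Cardinal.extend_function_of_lt f hs ⟨Equiv.refl α⟩
  refine ⟨g, fun i => ?_⟩
  simpa [f] using hg ⟨a i, i, rfl⟩

theorem Equiv.Perm.exists_fixing_apply_eq {α ι : Type*} [Finite ι] (p : α → Prop)
    [Infinite {x // p x}] (a b : ι → α) (ha : Injective a) (hb : Injective b)
    (hpa : ∀ i, p (a i)) (hpb : ∀ i, p (b i)) :
    ∃ v : Equiv.Perm α, (∀ x, ¬ p x → v x = x) ∧ ∀ i, v (a i) = b i := by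
  classical
  obtain ⟨g, hg⟩ := exists_apply_embedding_eq
    ⟨fun i => ⟨a i, hpa i⟩, fun i j h => ha (congrArg Subtype.val h)⟩
    ⟨fun i => ⟨b i, hpb i⟩, fun i j h => hb (congrArg Subtype.val h)⟩
  refine ⟨ofSubtype g, fun x hx => ofSubtype_apply_of_not_mem g hx, fun i => ?_⟩
  rw [ofSubtype_apply_of_mem g (hpa i)]
  exact congrArg Subtype.val (hg i)

theorem Equiv.Perm.exists_fixing_lt_apply_eq {ι : Type*} [Finite ι] (n : ℕ) (a b : ι → ℕ)
    (ha : Injective a) (hb : Injective b) (hna : ∀ i, n ≤ a i) (hnb : ∀ i, n ≤ b i) :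
    ∃ v : Equiv.Perm ℕ, (∀ x, x < n → v x = x) ∧ ∀ i, v (a i) = b i := by
  have : Infinite {x // n ≤ x} := (Set.Ici_infinite n).to_subtype
  obtain ⟨v, hv, hva⟩ := exists_fixing_apply_eq (n ≤ ·) a b ha hb hna hnb
  exact ⟨v, fun x hx => hv x (Nat.not_le.mpr hx), hva⟩

theorem perm_decomposition_pointwise_stabilizer_general (n : ℕ)
    (f : Equiv.Perm ℕ)
    (hf₁ : ∀ i, i < n → f i = n + i)
    (hf₂ : ∀ i, n ≤ i → i < 2 * n → f i = i - n)
    (hf₃ : ∀ i, 2 * n ≤ i → f i = i)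
    (φ : Equiv.Perm ℕ) :
    ∃ v₁ v₂ v₃ : Equiv.Perm ℕ,
      (∀ i, i < n → v₁ i = i) ∧ (∀ i, i < n → v₂ i = i) ∧ (∀ i, i < n → v₃ i = i) ∧
      φ = v₁ * f * v₂ * f * v₃ := by
  -- `v₂` sends `f i = n + i` to `f (φ i)` when `φ i < n`, and parks it at `2n + i` otherwise
  obtain ⟨v₂, hv₂, hv₂f⟩ := Equiv.Perm.exists_fixing_lt_apply_eq n
    (fun i : Fin n => n + i) (fun i => if φ i < n then n + φ i else 2 * n + i)
    (fun i j h => Fin.ext (by simpa using h))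
    (fun i j h => by
      dsimp only at h
      split_ifs at h with hi hj hj <;> first | omega | exact Fin.ext (φ.injective (by omega)))
    (fun i => by simp) (fun i => by split_ifs <;> omega)
  -- `v₁` then sends each parked `2n + i` to `φ i`
  obtain ⟨v₁, hv₁, hv₁f⟩ := Equiv.Perm.exists_fixing_lt_apply_eq n
    (fun i : {i : Fin n // n ≤ φ i} => 2 * n + i) (fun i => φ i)
    (fun i j h => Subtype.ext (Fin.ext (by simpa using h)))
    (fun i j h => Subtype.ext (Fin.ext (φ.injective h)))
    (fun i => by omega) (fun i => i.2)
  have hw : ∀ i, i < n → (v₁ * f * v₂ * f) i = φ i := by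
    intro i hi
    simp only [Equiv.Perm.mul_apply, hf₁ i hi]
    have hv₂i := hv₂f ⟨i, hi⟩
    dsimp only at hv₂i
    rw [hv₂i]
    split_ifs with hφ
    · rw [hf₂ _ (by omega) (by omega), Nat.add_sub_cancel_left, hv₁ _ hφ]
    · rw [hf₃ _ (by omega)]
      exact hv₁f ⟨⟨i, hi⟩, Nat.le_of_not_lt hφ⟩
  refine ⟨v₁, v₂, (v₁ * f * v₂ * f)⁻¹ * φ, hv₁, hv₂, fun i hi => ?_, by group⟩
  rw [Equiv.Perm.mul_apply, Equiv.Perm.inv_eq_iff_eq, hw i hi]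

/-- Algebraic core of the proof that `S_∞` is coarsely bounded: fix `n ≥ 1`, let
`V` be the pointwise stabilizer of `{0, …, n−1}` in the permutation group of `ℕ`,
and let `f` be the involution swapping `i` and `n + i` for `i < n` and fixing
everything `≥ 2n`.  Then every permutation `φ` of `ℕ` can be written as
`φ = v₁ ∘ f ∘ v₂ ∘ f ∘ v₃` with `v₁, v₂, v₃ ∈ V`. -/
theorem perm_decomposition_pointwise_stabilizer (n : ℕ) (hn : 1 ≤ n)
    (f : Equiv.Perm ℕ)
    (hf₁ : ∀ i, i < n → f i = n + i)
    (hf₂ : ∀ i, n ≤ i → i < 2 * n → f i = i - n)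
    (hf₃ : ∀ i, 2 * n ≤ i → f i = i)
    (φ : Equiv.Perm ℕ) :
    ∃ v₁ v₂ v₃ : Equiv.Perm ℕ,
      (∀ i, i < n → v₁ i = i) ∧ (∀ i, i < n → v₂ i = i) ∧ (∀ i, i < n → v₃ i = i) ∧
      φ = v₁ * f * v₂ * f * v₃ :=
  perm_decomposition_pointwise_stabilizer_general n f hf₁ hf₂ hf₃ φ
end

section
/- Let C be a free group and let A ≤ B ≤ C be subgroups such that A is a free factor of C. Then A is a free factor of B. -/
/-!
Choose a basis of `C` in which `A` is generated by a subset `s` of the basis: bases of `A` and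
of a complement `P` (both free by Nielsen–Schreier) combine to a basis of `A ∗ P ≅ C`.
Schreier's proof of the Nielsen–Schreier theorem, run with a geodesic spanning tree of the
Schreier graph of `B`, gives a basis of `B` indexed by the edges outside the tree. A basis
element `x ∈ s` lies in `B`, so it labels a loop at the base coset; a loop is never a tree edge,
and its Schreier generator is `x` itself. So the basis of `B` contains `s`, and part of a basis
generates a free factor.
-/

open Monoid

/-- A subgroup `A` of a group `G` is a *free factor* of `G` if there is a subgroup
`P ≤ G` such that the canonical homomorphism `A ∗ P → G` from the free (coproduct)
product, induced by the two inclusions, is an isomorphism (i.e. bijective). -/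
def IsFreeFactor {G : Type*} [Group G] (A : Subgroup G) : Prop :=
  ∃ P : Subgroup G, Function.Bijective ⇑(Monoid.Coprod.lift A.subtype P.subtype)

open Function

section FreeFactor

variable {G M N : Type*} [Group G] [Group M] [Group N]

theorem Monoid.Coprod.map_surjective {M' N' : Type*} [Group M'] [Group N'] {f : M →* M'}
    {g : N →* N'} (hf : Surjective f) (hg : Surjective g) : Surjective (Coprod.map f g) := by
  rw [← MonoidHom.range_eq_top, Coprod.range_eq, Coprod.map_comp_inl, Coprod.map_comp_inr,
    MonoidHom.range_comp, MonoidHom.range_comp, MonoidHom.range_eq_top_of_surjective _ hf,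
    MonoidHom.range_eq_top_of_surjective _ hg, ← MonoidHom.range_eq_map,
    ← MonoidHom.range_eq_map, Coprod.range_inl_sup_range_inr]

theorem isFreeFactor_range_of_bijective_lift {f : M →* G} {g : N →* G}
    (h : Bijective (Coprod.lift f g)) : IsFreeFactor f.range := by
  refine ⟨g.range, ?_⟩
  have hm := Coprod.map_surjective f.rangeRestrict_surjective g.rangeRestrict_surjective
  have hcomp : (Coprod.lift f.range.subtype g.range.subtype).comp
      (Coprod.map f.rangeRestrict g.rangeRestrict) = Coprod.lift f g := by
    ext <;> rfl
  rw [← hcomp, MonoidHom.coe_comp] at h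
  refine ⟨fun a b hab => ?_, h.2.of_comp⟩
  obtain ⟨a, rfl⟩ := hm a
  obtain ⟨b, rfl⟩ := hm b
  exact congrArg _ (h.1 hab)

end FreeFactor

section FreeGroupBases

variable {ι κ G M N : Type*} [Group G] [Group M] [Group N]

def FreeGroup.sumEquivCoprod : FreeGroup (ι ⊕ κ) ≃* Coprod (FreeGroup ι) (FreeGroup κ) :=
  MonoidHom.toMulEquiv
    (FreeGroup.lift (Sum.elim (Coprod.inl ∘ FreeGroup.of) (Coprod.inr ∘ FreeGroup.of)))
    (Coprod.lift (FreeGroup.map Sum.inl) (FreeGroup.map Sum.inr))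
    (by ext (i | k) <;> simp)
    (by ext <;> simp)

def FreeGroupBasis.coprod (b : FreeGroupBasis ι M) (c : FreeGroupBasis κ N) :
    FreeGroupBasis (ι ⊕ κ) (Coprod M N) :=
  .ofRepr ((MulEquiv.coprodCongr b.repr c.repr).trans FreeGroup.sumEquivCoprod.symm)

theorem FreeGroupBasis.isFreeFactor_closure_image (b : FreeGroupBasis ι G) (s : Set ι) :
    IsFreeFactor (Subgroup.closure (b '' s)) := by
  classical
  let e := (b.reindex (Equiv.Set.sumCompl s).symm).repr.trans FreeGroup.sumEquivCoprod
  have hlift : Coprod.lift (FreeGroup.lift (b ∘ ((↑) : s → ι)))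
      (FreeGroup.lift (b ∘ ((↑) : ↥sᶜ → ι))) = (e.symm : _ →* G) := by
    ext <;> exact ((b.reindex_apply _ _).trans (by simp)).symm
  rw [← Subtype.range_coe (s := s), ← Set.range_comp, ← FreeGroup.range_lift_eq_closure]
  exact isFreeFactor_range_of_bijective_lift (by rw [hlift]; exact e.symm.bijective)

end FreeGroupBases

namespace Schreier

open FreeGroup

variable {X : Type*} (B : Subgroup (FreeGroup X))

def basepoint : FreeGroup X ⧸ B := ((1 : FreeGroup X) : FreeGroup X ⧸ B)

lemma smul_basepoint (g : FreeGroup X) : g • basepoint B = (g : FreeGroup X ⧸ B) := by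
  rw [basepoint, MulAction.Quotient.smul_mk, smul_eq_mul, mul_one]

lemma mk_eq_basepoint_iff {g : FreeGroup X} :
    (g : FreeGroup X ⧸ B) = basepoint B ↔ g ∈ B := by
  rw [basepoint, QuotientGroup.eq, mul_one, inv_mem_iff]

lemma smul_basepoint_of_mem {g : FreeGroup X} (hg : g ∈ B) : g • basepoint B = basepoint B := by
  rw [smul_basepoint, mk_eq_basepoint_iff B |>.mpr hg]

variable [DecidableEq X]

noncomputable def height (v : FreeGroup X ⧸ B) : ℕ :=
  sInf (FreeGroup.norm '' {g : FreeGroup X | (g : FreeGroup X ⧸ B) = v})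

lemma exists_norm_eq_height (v : FreeGroup X ⧸ B) :
    ∃ g : FreeGroup X, (g : FreeGroup X ⧸ B) = v ∧ g.norm = height B v :=
  have ⟨g, hg⟩ := QuotientGroup.mk_surjective v
  Nat.sInf_mem (s := FreeGroup.norm '' _) ⟨g.norm, g, hg, rfl⟩

lemma height_mk_le (g : FreeGroup X) : height B (g : FreeGroup X ⧸ B) ≤ g.norm :=
  Nat.sInf_le ⟨g, rfl, rfl⟩

lemma exists_letter_height_lt {v : FreeGroup X ⧸ B} (hv : v ≠ basepoint B) :
    ∃ ℓ : FreeGroup X, (∃ x, ℓ = of x ∨ ℓ = (of x)⁻¹) ∧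
      height B (ℓ⁻¹ • v) < height B v := by
  obtain ⟨g, rfl, hg⟩ := exists_norm_eq_height B v
  rcases hw : g.toWord with _ | ⟨⟨x, t⟩, w⟩
  · exact absurd (by rw [toWord_eq_nil_iff.mp hw]; rfl) hv
  have hg_eq : g = mk [(x, t)] * mk w := by
    rw [mul_mk, List.singleton_append, ← hw, mk_toWord]
  refine ⟨mk [(x, t)], ⟨x, ?_⟩, ?_⟩
  · cases t
    · exact .inr rfl
    · exact .inl rfl
  · calc height B ((mk [(x, t)])⁻¹ • (g : FreeGroup X ⧸ B))
        = height B (mk w : FreeGroup X ⧸ B) := by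
          rw [MulAction.Quotient.smul_mk, smul_eq_mul, hg_eq, inv_mul_cancel_left]
      _ ≤ w.length := (height_mk_le B _).trans norm_mk_le
      _ < height B g := by rw [← hg, FreeGroup.norm, hw, List.length_cons]; omega

noncomputable def letter {v : FreeGroup X ⧸ B} (hv : v ≠ basepoint B) : FreeGroup X :=
  (exists_letter_height_lt B hv).choose

lemma letter_spec {v : FreeGroup X ⧸ B} (hv : v ≠ basepoint B) :
    ∃ x, letter B hv = of x ∨ letter B hv = (of x)⁻¹ :=
  (exists_letter_height_lt B hv).choose_spec.1

lemma height_letter_inv_smul_lt {v : FreeGroup X ⧸ B} (hv : v ≠ basepoint B) :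
    height B ((letter B hv)⁻¹ • v) < height B v :=
  (exists_letter_height_lt B hv).choose_spec.2

open Classical in
noncomputable def transversal (v : FreeGroup X ⧸ B) : FreeGroup X :=
  if hv : v = basepoint B then 1 else letter B hv * transversal ((letter B hv)⁻¹ • v)
termination_by height B v
decreasing_by exact height_letter_inv_smul_lt B hv

@[elab_as_elim]
theorem transversal_induction {motive : FreeGroup X ⧸ B → Prop} (base : motive (basepoint B))
    (step : ∀ v (hv : v ≠ basepoint B), motive ((letter B hv)⁻¹ • v) → motive v)
    (v : FreeGroup X ⧸ B) : motive v :=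
  (measure (height B)).wf.induction v fun v ih => by
    by_cases hv : v = basepoint B
    · exact hv ▸ base
    · exact step v hv (ih _ (height_letter_inv_smul_lt B hv))

lemma transversal_basepoint : transversal B (basepoint B) = 1 := by
  rw [transversal, dif_pos rfl]

lemma transversal_of_ne {v : FreeGroup X ⧸ B} (hv : v ≠ basepoint B) :
    transversal B v = letter B hv * transversal B ((letter B hv)⁻¹ • v) := by
  rw [transversal, dif_neg hv]

lemma transversal_smul_basepoint (v : FreeGroup X ⧸ B) : transversal B v • basepoint B = v := by
  induction v using transversal_induction B with
  | base => rw [transversal_basepoint, one_smul]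
  | step v hv ih => rw [transversal_of_ne B hv, mul_smul, ih, smul_inv_smul]

/-- The pair `(x, u)` stands for the edge of the Schreier graph from `u` to `x • u`. -/
def IsTreeEdge (e : X × (FreeGroup X ⧸ B)) : Prop :=
  transversal B (of e.1 • e.2) = of e.1 * transversal B e.2

def Edge : Type _ := {e : X × (FreeGroup X ⧸ B) // ¬IsTreeEdge B e}

open Classical in
noncomputable def label (e : X × (FreeGroup X ⧸ B)) : FreeGroup (Edge B) :=
  if h : IsTreeEdge B e then 1 else of ⟨e, h⟩

/-- `rewriting B c v` follows the path spelled by `c` that ends at `v` and records the non-tree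
edges it crosses; the semidirect product makes `c ↦ rewriting B c` a crossed homomorphism. -/
noncomputable def rewritingHom :
    FreeGroup X →* (FreeGroup X ⧸ B → FreeGroup (Edge B)) ⋊[mulAutArrow] FreeGroup X :=
  FreeGroup.lift fun x => ⟨fun v => label B (x, (of x)⁻¹ • v), of x⟩

noncomputable def rewriting (c : FreeGroup X) : FreeGroup X ⧸ B → FreeGroup (Edge B) :=
  (rewritingHom B c).left

lemma rewritingHom_right (c : FreeGroup X) : (rewritingHom B c).right = c := by
  suffices SemidirectProduct.rightHom.comp (rewritingHom B) = MonoidHom.id _ from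
    DFunLike.congr_fun this c
  ext x
  simp [rewritingHom]

lemma rewriting_one (v : FreeGroup X ⧸ B) : rewriting B 1 v = 1 := by
  rw [rewriting, _root_.map_one, SemidirectProduct.one_left]
  rfl

lemma rewriting_of (x : X) (v : FreeGroup X ⧸ B) :
    rewriting B (of x) v = label B (x, (of x)⁻¹ • v) := by
  simp [rewriting, rewritingHom]

lemma rewriting_mul (c d : FreeGroup X) (v : FreeGroup X ⧸ B) :
    rewriting B (c * d) v = rewriting B c v * rewriting B d (c⁻¹ • v) := by
  rw [rewriting, _root_.map_mul, SemidirectProduct.mul_left, Pi.mul_apply, rewritingHom_right]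
  rfl

lemma rewriting_inv (c : FreeGroup X) (v : FreeGroup X ⧸ B) :
    rewriting B c⁻¹ v = (rewriting B c (c • v))⁻¹ := by
  rw [rewriting, _root_.map_inv, SemidirectProduct.inv_left, rewritingHom_right]
  show ((rewritingHom B c).left (c⁻¹⁻¹ • v))⁻¹ = _
  rw [inv_inv]
  rfl

noncomputable def loop (e : X × (FreeGroup X ⧸ B)) : FreeGroup X :=
  (transversal B (of e.1 • e.2))⁻¹ * of e.1 * transversal B e.2

lemma loop_mem (e : X × (FreeGroup X ⧸ B)) : loop B e ∈ B := by
  rw [← mk_eq_basepoint_iff, ← smul_basepoint, loop, mul_smul, mul_smul,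
    transversal_smul_basepoint, inv_smul_eq_iff, transversal_smul_basepoint]

lemma loop_eq_one_of_isTreeEdge {e : X × (FreeGroup X ⧸ B)} (h : IsTreeEdge B e) :
    loop B e = 1 := by
  rw [loop, h]
  group

lemma loop_basepoint {x : X} (hx : of x ∈ B) : loop B (x, basepoint B) = of x := by
  rw [loop, smul_basepoint_of_mem B hx, transversal_basepoint]
  group

lemma not_isTreeEdge_basepoint {x : X} (hx : of x ∈ B) : ¬IsTreeEdge B (x, basepoint B) := by
  rw [IsTreeEdge, smul_basepoint_of_mem B hx, transversal_basepoint, mul_one]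
  exact (of_ne_one x).symm

noncomputable def loopLift : FreeGroup (Edge B) →* FreeGroup X :=
  FreeGroup.lift fun e => loop B e.1

lemma loopLift_label (e : X × (FreeGroup X ⧸ B)) : loopLift B (label B e) = loop B e := by
  unfold label
  split_ifs with h
  · rw [_root_.map_one, loop_eq_one_of_isTreeEdge B h]
  · exact FreeGroup.lift_apply_of

lemma loopLift_rewriting (c : FreeGroup X) (v : FreeGroup X ⧸ B) :
    loopLift B (rewriting B c v) = (transversal B v)⁻¹ * c * transversal B (c⁻¹ • v) := by
  induction c using FreeGroup.induction_on generalizing v with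
  | C1 => rw [rewriting_one, _root_.map_one, inv_one, one_smul]; group
  | of x => rw [rewriting_of, loopLift_label, loop, smul_inv_smul]
  | inv_of x ih => rw [rewriting_inv, _root_.map_inv, ih, inv_smul_smul, inv_inv]; group
  | mul c d ihc ihd => rw [rewriting_mul, _root_.map_mul, ihc, ihd, mul_inv_rev, mul_smul]; group

lemma rewriting_letter {v : FreeGroup X ⧸ B} (hv : v ≠ basepoint B) :
    rewriting B (letter B hv) v = 1 := by
  have hT := transversal_of_ne B hv
  obtain ⟨x, hx | hx⟩ := letter_spec B hv <;> rw [hx] at hT ⊢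
  · rw [rewriting_of, label, dif_pos]
    rw [IsTreeEdge, smul_inv_smul, ← hT]
  · rw [rewriting_inv, rewriting_of, inv_smul_smul, label, dif_pos, inv_one]
    rw [IsTreeEdge, hT, inv_inv, mul_inv_cancel_left]

lemma rewriting_transversal (v : FreeGroup X ⧸ B) : rewriting B (transversal B v) v = 1 := by
  induction v using transversal_induction B with
  | base => rw [transversal_basepoint, rewriting_one]
  | step v hv ih => rw [transversal_of_ne B hv, rewriting_mul, rewriting_letter, ih, one_mul]

lemma rewriting_loop (e : X × (FreeGroup X ⧸ B)) :
    rewriting B (loop B e) (basepoint B) = label B e := by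
  simp only [loop, rewriting_mul, rewriting_inv, rewriting_of, mul_inv_rev, inv_inv, mul_smul,
    transversal_smul_basepoint, inv_smul_smul, rewriting_transversal, inv_one, one_mul, mul_one]

lemma range_loopLift_le : (loopLift B).range ≤ B := by
  rw [loopLift, FreeGroup.range_lift_eq_closure, Subgroup.closure_le]
  exact Set.range_subset_iff.mpr fun e => loop_mem B e.1

noncomputable def loopHom : FreeGroup (Edge B) →* B :=
  (loopLift B).codRestrict B fun w => range_loopLift_le B ⟨w, rfl⟩

lemma coe_loopHom_of (e : Edge B) : (loopHom B (of e) : FreeGroup X) = loop B e.1 :=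
  FreeGroup.lift_apply_of

noncomputable def rewritingRestrict : B →* FreeGroup (Edge B) where
  toFun b := rewriting B b (basepoint B)
  map_one' := rewriting_one B _
  map_mul' b b' := by
    rw [Subgroup.coe_mul, rewriting_mul, smul_basepoint_of_mem B (inv_mem b.2)]

noncomputable def basis : FreeGroupBasis (Edge B) B :=
  .ofRepr <| MonoidHom.toMulEquiv (rewritingRestrict B) (loopHom B)
    (by
      ext b
      simp only [MonoidHom.comp_apply, MonoidHom.id_apply, loopHom,
        MonoidHom.codRestrict_apply, rewritingRestrict, MonoidHom.coe_mk, OneHom.coe_mk,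
        loopLift_rewriting, transversal_basepoint, smul_basepoint_of_mem B (inv_mem b.2)]
      group)
    (by
      ext e
      simp only [MonoidHom.comp_apply, MonoidHom.id_apply, rewritingRestrict, MonoidHom.coe_mk,
        OneHom.coe_mk, coe_loopHom_of]
      exact (rewriting_loop B e.1).trans (dif_neg e.2))

def loopEdge {x : X} (hx : of x ∈ B) : Edge B :=
  ⟨(x, basepoint B), not_isTreeEdge_basepoint B hx⟩

lemma coe_basis_loopEdge {x : X} (hx : of x ∈ B) :
    (basis B (loopEdge B hx) : FreeGroup X) = of x :=
  (coe_loopHom_of B _).trans (loop_basepoint B hx)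

end Schreier

universe u

section SubgroupBasis

variable {ι : Type u} {G : Type*} [Group G]

lemma FreeGroupBasis.closure_range_eq_top (b : FreeGroupBasis ι G) :
    Subgroup.closure (Set.range b) = ⊤ := by
  rw [← FreeGroup.range_lift_eq_closure, MonoidHom.range_eq_top]
  have : FreeGroup.lift b = (b.repr.symm : FreeGroup ι →* G) := by
    ext
    exact FreeGroup.lift_apply_of
  rw [this]
  exact b.repr.symm.surjective

theorem FreeGroupBasis.exists_subgroup_basis_mem_range (b : FreeGroupBasis ι G)
    (B : Subgroup G) :
    ∃ (κ : Type u) (c : FreeGroupBasis κ B),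
      ∀ i (hi : b i ∈ B), ⟨b i, hi⟩ ∈ Set.range c := by
  classical
  let B' := B.map (b.repr : G →* FreeGroup ι)
  refine ⟨_, (Schreier.basis B').map (b.repr.subgroupMap B).symm, fun i hi => ?_⟩
  have hi' : FreeGroup.of i ∈ B' := ⟨b i, hi, b.repr_apply_coe i⟩
  refine ⟨Schreier.loopEdge B' hi', Subtype.ext ?_⟩
  change b.repr.symm (Schreier.basis B' _ : FreeGroup ι) = b i
  rw [Schreier.coe_basis_loopEdge]
  rfl

theorem FreeGroupBasis.isFreeFactor_closure_image_subgroupOf (b : FreeGroupBasis ι G)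
    (s : Set ι) {B : Subgroup G} (hB : Subgroup.closure (b '' s) ≤ B) :
    IsFreeFactor ((Subgroup.closure (b '' s)).subgroupOf B) := by
  obtain ⟨κ, c, hc⟩ := b.exists_subgroup_basis_mem_range B
  convert c.isFreeFactor_closure_image {k | (c k : G) ∈ b '' s}
  apply Subgroup.map_injective B.subtype_injective
  rw [Subgroup.map_subgroupOf_eq_of_le hB, MonoidHom.map_closure, Set.image_image]
  congr 1
  ext g
  constructor
  · rintro ⟨i, hi, rfl⟩
    obtain ⟨k, hk⟩ := hc i (hB (Subgroup.subset_closure ⟨i, hi, rfl⟩))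
    have hk' : (c k : G) = b i := congrArg Subtype.val hk
    exact ⟨k, show (c k : G) ∈ b '' s from hk' ▸ ⟨i, hi, rfl⟩, hk'⟩
  · rintro ⟨k, hk, rfl⟩
    exact hk

end SubgroupBasis

theorem IsFreeFactor.exists_freeGroupBasis {G : Type u} [Group G] [IsFreeGroup G]
    {A : Subgroup G} (hA : IsFreeFactor A) :
    ∃ (ι : Type u) (s : Set ι) (b : FreeGroupBasis ι G), Subgroup.closure (b '' s) = A := by
  obtain ⟨P, hP⟩ := hA
  let bA := IsFreeGroup.basis A
  refine ⟨_, Set.range Sum.inl,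
    (bA.coprod (IsFreeGroup.basis P)).map (MulEquiv.ofBijective _ hP), ?_⟩
  rw [← Set.range_comp]
  change Subgroup.closure (Set.range (A.subtype ∘ bA)) = A
  rw [Set.range_comp, ← MonoidHom.map_closure, bA.closure_range_eq_top,
    ← MonoidHom.range_eq_map, A.range_subtype]

/-- Let `C` be a free group and `A ≤ B ≤ C` subgroups such that `A` is a free factor
of `C`. Then `A` is a free factor of `B`. -/
theorem isFreeFactor_of_le_of_isFreeFactor {C : Type*} [Group C] [IsFreeGroup C]
    (A B : Subgroup C) (hAB : A ≤ B) (hA : IsFreeFactor A) :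
    IsFreeFactor (A.subgroupOf B) := by
  obtain ⟨ι, s, b, rfl⟩ := hA.exists_freeGroupBasis
  exact b.isFreeFactor_closure_image_subgroupOf s hAB
end

section
/- Let C be a free group and let A ≤ B ≤ C be subgroups with A and B both free factors of C. Suppose the quotient groups C/⟨⟨B⟩⟩ and B/⟨⟨A⟩⟩_B are finitely generated, where ⟨⟨·⟩⟩ denotes normal closure (in C, respectively in B). Then C/⟨⟨A⟩⟩ is finitely generated and cork(C,A) = cork(C,B) + cork(B,A), i.e., rank(C/⟨⟨A⟩⟩) = rank(C/⟨⟨B⟩⟩) + rank(B/⟨⟨A⟩⟩_B). -/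
/-!
Count homomorphisms into `ℤ/2`: a free group of rank `n` has exactly `2 ^ n` of them. Since `B` is
a free factor, there is a retraction `ρ : C → B`, and for abelian `M` the maps
`f ↦ (f · (f ∘ ρ)⁻¹, f|_B)` and `(u, v) ↦ u · (v ∘ ρ)` identify homomorphisms `C → M` killing `A`
with pairs of homomorphisms `C → M` killing `B` and `B → M` killing `A`. All three quotients are
free: `C/⟨⟨A⟩⟩` and `C/⟨⟨B⟩⟩` are isomorphic to the complementary factors, and `ρ` makes
`B/⟨⟨A⟩⟩_B` a retract of `C/⟨⟨A⟩⟩`, hence a subgroup of a free group (Nielsen–Schreier).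
-/

open Monoid

open Subgroup Function

theorem Monoid.Coprod.ker_snd {M N : Type*} [Group M] [Group N] :
    (Coprod.snd : Coprod M N →* N).ker = normalClosure (Set.range Coprod.inl) := by
  refine le_antisymm (fun x hx => ?_) (normalClosure_le_normal ?_)
  · have hfactor : ((QuotientGroup.mk' _).comp Coprod.inr).comp Coprod.snd =
        QuotientGroup.mk' (normalClosure (Set.range (Coprod.inl : M →* Coprod M N))) :=
      Coprod.hom_ext (MonoidHom.ext fun m => by
        simp only [MonoidHom.comp_apply, Coprod.snd_apply_inl, map_one]
        exact ((QuotientGroup.eq_one_iff _).2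
          (subset_normalClosure (Set.mem_range_self m))).symm) rfl
    have := DFunLike.congr_fun hfactor x
    rw [MonoidHom.comp_apply, hx] at this
    simpa using this.symm
  · rintro _ ⟨m, rfl⟩
    exact Coprod.snd_apply_inl m

namespace IsFreeFactor

variable {G : Type*} [Group G] {A : Subgroup G}

theorem exists_retraction (h : IsFreeFactor A) : ∃ r : G →* A, ∀ a : A, r a = a := by
  obtain ⟨P, hP⟩ := h
  let e := MulEquiv.ofBijective _ hP
  refine ⟨Coprod.fst.comp e.symm.toMonoidHom, fun a => ?_⟩
  have : e.symm a = Coprod.inl a :=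
    e.symm_apply_eq.2 (Coprod.lift_apply_inl A.subtype P.subtype a).symm
  simp [this]

theorem exists_quotient_mulEquiv (h : IsFreeFactor A) :
    ∃ P : Subgroup G, Nonempty (G ⧸ normalClosure (A : Set G) ≃* P) := by
  obtain ⟨P, hP⟩ := h
  let e := MulEquiv.ofBijective _ hP
  have hker : normalClosure (A : Set G) = (Coprod.snd.comp (e.symm : G →* Coprod A P)).ker := by
    rw [← MonoidHom.comap_ker, Coprod.ker_snd, comap_equiv_eq_map_symm,
      MulEquiv.symm_symm, map_normalClosure _ (e : Coprod A P →* G) e.surjective, ← Set.range_comp]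
    congr
    ext
    simp [e]
  exact ⟨P, ⟨QuotientGroup.liftEquiv _ (Coprod.snd_surjective.comp e.symm.surjective) hker⟩⟩

theorem isFreeGroup_quotient [IsFreeGroup G] (h : IsFreeFactor A) :
    IsFreeGroup (G ⧸ normalClosure (A : Set G)) := by
  obtain ⟨P, ⟨e⟩⟩ := h.exists_quotient_mulEquiv
  exact IsFreeGroup.ofMulEquiv e.symm

end IsFreeFactor

theorem IsFreeGroup.of_injective {G H : Type*} [Group G] [Group H] [IsFreeGroup H] {f : G →* H}
    (hf : Injective f) : IsFreeGroup G :=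
  IsFreeGroup.ofMulEquiv (MonoidHom.ofInjective hf).symm

section Retraction

variable {G : Type*} [Group G] {A B : Subgroup G}

theorem normalClosure_le_comap_of_retraction {r : G →* B} (hr : ∀ b : B, r b = b) (hAB : A ≤ B) :
    normalClosure (A : Set G) ≤ (normalClosure (A.subgroupOf B : Set B)).comap r :=
  normalClosure_le_normal fun a ha => by
    rw [SetLike.mem_coe, mem_comap, show r a = ⟨a, hAB ha⟩ from hr ⟨a, hAB ha⟩]
    exact subset_normalClosure (mem_subgroupOf.2 ha)

theorem isFreeGroup_quotient_subgroupOf_of_retraction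
    [IsFreeGroup (G ⧸ normalClosure (A : Set G))] {r : G →* B} (hr : ∀ b : B, r b = b)
    (hAB : A ≤ B) : IsFreeGroup (B ⧸ normalClosure (A.subgroupOf B : Set B)) := by
  let ι := QuotientGroup.map (normalClosure (A.subgroupOf B : Set B)) (normalClosure (A : Set G))
    B.subtype (normalClosure_le_normal fun _ hb => subset_normalClosure hb)
  let ρ := QuotientGroup.map _ _ r (normalClosure_le_comap_of_retraction hr hAB)
  refine IsFreeGroup.of_injective (f := ι) (LeftInverse.injective (g := ρ) fun y => ?_)
  induction y using QuotientGroup.induction_on with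
  | H b => simp [ι, ρ, hr]

variable (M : Type*) [CommGroup M]

def vanishingHomEquivProdOfRetraction {r : G →* B} (hr : ∀ b : B, r b = b) (hAB : A ≤ B) :
    {f : G →* M // (A : Set G) ⊆ f.ker} ≃
      {f : G →* M // (B : Set G) ⊆ f.ker} × {g : B →* M // (A.subgroupOf B : Set B) ⊆ g.ker} where
  toFun f := (⟨f.1 / f.1.comp (B.subtype.comp r), fun b hb => by
      simp [show r b = ⟨b, hb⟩ from hr ⟨b, hb⟩]⟩,
    ⟨f.1.comp B.subtype, fun a ha => f.2 ha⟩)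
  invFun p := ⟨p.1.1 * p.2.1.comp r, fun a ha => by
    simp [show r a = ⟨a, hAB ha⟩ from hr ⟨a, hAB ha⟩, MonoidHom.mem_ker.1 (p.1.2 (hAB ha)),
      MonoidHom.mem_ker.1 (p.2.2 (show (⟨a, hAB ha⟩ : B) ∈ A.subgroupOf B from ha))]⟩
  left_inv f := by ext; simp
  right_inv p := by
    ext x
    · simp [hr, MonoidHom.mem_ker.1 (p.1.2 (r x).2)]
    · simp [hr, MonoidHom.mem_ker.1 (p.1.2 x.2)]

end Retraction

def quotientNormalClosureHomEquiv {G : Type*} [Group G] (M : Type*) [Monoid M] (S : Set G) :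
    (G ⧸ normalClosure S →* M) ≃ {f : G →* M // S ⊆ f.ker} where
  toFun f := ⟨f.comp (QuotientGroup.mk' _), fun s hs => by
    simp [(QuotientGroup.eq_one_iff s).2 (subset_normalClosure hs)]⟩
  invFun f := QuotientGroup.lift _ f.1 (normalClosure_le_normal f.2)
  left_inv f := QuotientGroup.monoidHom_ext _ rfl
  right_inv f := rfl

theorem card_hom_quotient_normalClosure_eq_mul {G : Type*} [Group G] {A B : Subgroup G}
    (M : Type*) [CommGroup M] {r : G →* B} (hr : ∀ b : B, r b = b) (hAB : A ≤ B) :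
    Nat.card (G ⧸ normalClosure (A : Set G) →* M) =
      Nat.card (G ⧸ normalClosure (B : Set G) →* M) *
        Nat.card (B ⧸ normalClosure (A.subgroupOf B : Set B) →* M) := by
  rw [← Nat.card_prod]
  exact Nat.card_congr <| (quotientNormalClosureHomEquiv M _).trans <|
    (vanishingHomEquivProdOfRetraction M hr hAB).trans <|
      ((quotientNormalClosureHomEquiv M _).prodCongr (quotientNormalClosureHomEquiv M _)).symm

section Rank

variable {G M : Type*} [Group G] [Group M]

theorem injective_restrict_of_closure_eq_top {S : Set G} (hS : closure S = ⊤) :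
    Injective fun (f : G →* M) (s : S) => f s :=
  fun _ _ h => MonoidHom.eq_of_eqOn_dense hS fun s hs => congrFun h ⟨s, hs⟩

theorem Group.finite_monoidHom [Group.FG G] [Finite M] : Finite (G →* M) := by
  obtain ⟨S, -, hS⟩ := Group.rank_spec G
  exact Finite.of_injective _ (injective_restrict_of_closure_eq_top hS)

theorem Group.card_monoidHom_le_pow_rank [Group.FG G] [Finite M] :
    Nat.card (G →* M) ≤ Nat.card M ^ Group.rank G := by
  obtain ⟨S, hcard, hS⟩ := Group.rank_spec G
  calc Nat.card (G →* M) ≤ Nat.card (S → M) :=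
        Nat.card_le_card_of_injective _ (injective_restrict_of_closure_eq_top hS)
    _ = Nat.card M ^ Group.rank G := by rw [Nat.card_fun, Nat.card_eq_finsetCard, hcard]

namespace IsFreeGroup

variable [IsFreeGroup G]

theorem card_monoidHom [Finite (Generators G)] :
    Nat.card (G →* M) = Nat.card M ^ Nat.card (Generators G) := by
  rw [← Nat.card_fun]
  exact Nat.card_congr IsFreeGroup.lift.symm

theorem finite_generators_of_finite_monoidHom [Nontrivial M] [Finite (G →* M)] :
    Finite (Generators G) := by
  classical
  obtain ⟨m, hm⟩ := exists_ne (1 : M)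
  have : Finite (Generators G → M) := Finite.of_equiv _ IsFreeGroup.lift.symm
  refine Finite.of_injective (fun a => Pi.mulSingle a m) fun a b hab => ?_
  by_contra hne
  exact hm (by simpa [hne] using congrFun hab a)

theorem fg_of_finite_generators [Finite (Generators G)] : Group.FG G :=
  Group.fg_of_surjective (f := (toFreeGroup G).symm.toMonoidHom) (toFreeGroup G).symm.surjective

theorem rank_le_card_generators [Group.FG G] [Finite (Generators G)] :
    Group.rank G ≤ Nat.card (Generators G) := by
  classical
  have : Fintype (Generators G) := Fintype.ofFinite _
  calc Group.rank G = Group.rank (FreeGroup (Generators G)) := Group.rank_congr (toFreeGroup G)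
    _ ≤ (Finset.univ.image (FreeGroup.of : Generators G → _)).card :=
        Group.rank_le (by simp [FreeGroup.closure_range_of])
    _ ≤ Nat.card (Generators G) := by
        rw [Nat.card_eq_fintype_card]; exact Finset.card_image_le

theorem finite_generators [Group.FG G] : Finite (Generators G) :=
  have := Group.finite_monoidHom (G := G) (M := Multiplicative (ZMod 2))
  finite_generators_of_finite_monoidHom (M := Multiplicative (ZMod 2))

theorem rank_eq_card_generators [Group.FG G] : Group.rank G = Nat.card (Generators G) := by
  have := finite_generators (G := G)
  refine rank_le_card_generators.antisymm ?_
  have h := Group.card_monoidHom_le_pow_rank (G := G) (M := Multiplicative (ZMod 2))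
  rw [card_monoidHom, show Nat.card (Multiplicative (ZMod 2)) = 2 by simp] at h
  exact (Nat.pow_le_pow_iff_right one_lt_two).1 h

theorem card_monoidHom_eq_pow_rank [Group.FG G] :
    Nat.card (G →* M) = Nat.card M ^ Group.rank G := by
  have := finite_generators (G := G)
  rw [card_monoidHom, rank_eq_card_generators]

theorem fg_of_finite_monoidHom [Nontrivial M] [Finite (G →* M)] : Group.FG G :=
  have := finite_generators_of_finite_monoidHom (G := G) (M := M)
  fg_of_finite_generators

end IsFreeGroup

end Rank

/-- Additivity of corank: if `A ≤ B ≤ C` with `A, B` free factors of the free group `C`,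
and the coranks `cork(C,B)` and `cork(B,A)` are defined (i.e. the corresponding
quotients by normal closures are finitely generated), then `cork(C,A)` is defined and
`cork(C,A) = cork(C,B) + cork(B,A)`, where `cork(B,A) = rank (B/⟨⟨A⟩⟩_B)`. -/
theorem corank_additive {C : Type*} [Group C] [IsFreeGroup C]
    (A B : Subgroup C) (hAB : A ≤ B)
    (hA : IsFreeFactor A) (hB : IsFreeFactor B)
    (hCB : Group.FG (C ⧸ Subgroup.normalClosure (B : Set C)))
    (hBA : Group.FG (↥B ⧸ Subgroup.normalClosure ((A.subgroupOf B : Subgroup B) : Set B))) :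
    ∃ hCA : Group.FG (C ⧸ Subgroup.normalClosure (A : Set C)),
      @Group.rank _ _ hCA = @Group.rank _ _ hCB + @Group.rank _ _ hBA := by
  obtain ⟨r, hr⟩ := hB.exists_retraction
  have := hA.isFreeGroup_quotient
  have := hB.isFreeGroup_quotient
  have := isFreeGroup_quotient_subgroupOf_of_retraction hr hAB
  let M := Multiplicative (ZMod 2)
  have hcard := card_hom_quotient_normalClosure_eq_mul M hr hAB
  rw [IsFreeGroup.card_monoidHom_eq_pow_rank (G := C ⧸ normalClosure (B : Set C)),
    IsFreeGroup.card_monoidHom_eq_pow_rank (G := B ⧸ normalClosure (A.subgroupOf B : Set B)),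
    ← pow_add] at hcard
  have : Finite (C ⧸ normalClosure (A : Set C) →* M) :=
    Nat.finite_of_card_ne_zero (by simp [hcard, M])
  have hCA := IsFreeGroup.fg_of_finite_monoidHom (G := C ⧸ normalClosure (A : Set C)) (M := M)
  rw [IsFreeGroup.card_monoidHom_eq_pow_rank, show Nat.card M = 2 by simp [M]] at hcard
  exact ⟨hCA, Nat.pow_right_injective le_rfl hcard⟩
end

section
/- Let X be a topological space, x ∈ X, and let f, g : X → X be continuous maps with f(x) = x and g(x) = x. Let H be a homotopy from f to g, and let α be the loop at x defined by α(t) = H(t, x). Suppose that the endomorphisms of the fundamental group π₁(X,x) induced by f and by g coincide, that this common endomorphism is surjective, and that the center of π₁(X,x) is trivial. Then α is nullhomotopic, i.e., homotopic rel endpoints to the constant loop at x. -/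
/-!
Tracking the base point along the homotopy gives the naturality square
`f_*[γ] · [α] = [α] · g_*[γ]` in `π₁(X, x)`. Since `f_* = g_*` and `f_*` is onto, `[α]`
commutes with every class, so it is central and therefore trivial.
-/

open unitInterval

theorem Path.Homotopic.trans_comm_of_forall_trans_comm_of_surjective {X : Type*}
    [TopologicalSpace X] {x : X} {ι : Sort*} {α : Path x x} (F : ι → Path x x)
    (hcomm : ∀ i, ((F i).trans α).Homotopic (α.trans (F i)))
    (hsurj : ∀ δ, ∃ i, (F i).Homotopic δ) (δ : Path x x) :
    (α.trans δ).Homotopic (δ.trans α) := by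
  obtain ⟨i, hi⟩ := hsurj δ
  exact ((Path.Homotopic.refl α).hcomp hi.symm).trans
    ((hcomm i).symm.trans (hi.hcomp (Path.Homotopic.refl α)))

theorem Path.Homotopic.map_trans_evalAt_cast {X Y : Type*} [TopologicalSpace X]
    [TopologicalSpace Y] {f g : C(X, Y)} (H : f.Homotopy g) {x : X} {y : Y} (hf : f x = y)
    (hg : g x = y) (γ : Path x x) :
    (((γ.map f.continuous).cast hf.symm hf.symm).trans
        ((H.evalAt x).cast hf.symm hg.symm)).Homotopic
      (((H.evalAt x).cast hf.symm hg.symm).trans ((γ.map g.continuous).cast hg.symm hg.symm)) :=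
  (Path.Homotopic.map_trans_evalAt H γ).pathCast hf.symm hg.symm

/-- Suppose `f, g : X → X` fix `x`, `H` is a homotopy from `f` to `g`, and
`α` is the loop `t ↦ H(t, x)` at `x`.  If `f` and `g` induce the same endomorphism
of `π₁(X, x)` (i.e. `[f ∘ γ] = [g ∘ γ]` for every loop `γ` at `x`), this common
endomorphism is surjective on `π₁(X, x)`, and the center of `π₁(X, x)` is trivial,
then `α` is nullhomotopic (homotopic rel endpoints to the constant loop at `x`). -/
theorem loop_of_homotopy_nullhomotopic {X : Type*} [TopologicalSpace X] (x : X)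
    (f g : C(X, X)) (hf : f x = x) (hg : g x = x)
    (H : ContinuousMap.Homotopy f g)
    (α : Path x x) (hα : ∀ t : I, α t = H (t, x))
    (hsame : ∀ γ : Path x x,
      Path.Homotopic ((γ.map f.continuous).cast hf.symm hf.symm)
        ((γ.map g.continuous).cast hg.symm hg.symm))
    (hsurj : ∀ γ : Path x x, ∃ δ : Path x x,
      Path.Homotopic ((δ.map f.continuous).cast hf.symm hf.symm) γ)
    (hcenter : ∀ γ : Path x x,
      (∀ δ : Path x x, Path.Homotopic (γ.trans δ) (δ.trans γ)) →
      Path.Homotopic γ (Path.refl x)) :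
    Path.Homotopic α (Path.refl x) := by
  obtain rfl : α = (H.evalAt x).cast hf.symm hg.symm := Path.ext (funext hα)
  have hcomm (γ : Path x x) :
      (((γ.map f.continuous).cast hf.symm hf.symm).trans
        ((H.evalAt x).cast hf.symm hg.symm)).Homotopic
      (((H.evalAt x).cast hf.symm hg.symm).trans
        ((γ.map f.continuous).cast hf.symm hf.symm)) :=
    (Path.Homotopic.map_trans_evalAt_cast H hf hg γ).trans
      ((Path.Homotopic.refl _).hcomp (hsame γ).symm)
  exact hcenter _
    (Path.Homotopic.trans_comm_of_forall_trans_comm_of_surjective _ hcomm hsurj)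
end

section
/- Let G be a separable, metrizable topological group that is locally coarsely bounded (some neighborhood of the identity is coarsely bounded in G) and has arbitrarily small open subgroups (every neighborhood of the identity contains an open subgroup). Then G admits a pseudo-metric d : G × G → ℝ that is continuous, left-invariant (d(kg, kh) = d(g,h) for all g,h,k ∈ G), and coarsely proper, meaning that for every g ∈ G and R ≥ 0 the ball {h ∈ G : d(g,h) ≤ R} is coarsely bounded in G. -/
/-! Choose an open subgroup `H` inside a coarsely bounded neighbourhood of `1`, and a dense
sequence `(xₙ)`, so that the cosets `xₙH` cover `G`. With `Yₙ = {1, x₀^{±1}, …, xₙ^{±1}}`, the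
sets `Wₙ = H (Yₙ H)ⁿ` satisfy `W₀ = H`, `Wₘ Wₙ ⊆ Wₘ₊ₙ`, `Wₙ⁻¹ = Wₙ`, and each is coarsely
bounded. Hence `ℓ g = min {n | g ∈ Wₙ}` is a group seminorm vanishing on the open set `H`, so it
is locally constant, and `d g h = ℓ (g⁻¹ * h)` works: its closed balls are translates of the
`Wₙ`. -/

open Pointwise

/-- A subset `A` of a topological group `G` is *coarsely bounded in `G`* if for every
neighborhood `V` of the identity there are a finite set `F ⊆ G` and an `n ≥ 1` with
`A ⊆ (F·V)ⁿ`. -/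
def IsCBIn (G : Type*) [Group G] [TopologicalSpace G] (A : Set G) : Prop :=
  ∀ V ∈ nhds (1 : G), ∃ F : Set G, F.Finite ∧ ∃ n : ℕ, 1 ≤ n ∧ A ⊆ (F * V) ^ n

open Topology Filter

namespace IsCBIn

variable {G : Type*} [Group G] [TopologicalSpace G] {A B : Set G}

lemma mono (hB : IsCBIn G B) (hAB : A ⊆ B) : IsCBIn G A := fun V hV =>
  let ⟨F, hF, n, hn, hBF⟩ := hB V hV
  ⟨F, hF, n, hn, hAB.trans hBF⟩

lemma of_finite (hA : A.Finite) : IsCBIn G A := fun V hV =>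
  ⟨A, hA, 1, le_rfl, by rw [pow_one]; exact Set.subset_mul_left A (mem_of_mem_nhds hV)⟩

lemma mul (hA : IsCBIn G A) (hB : IsCBIn G B) : IsCBIn G (A * B) := by
  intro V hV
  obtain ⟨F₁, hF₁, n₁, hn₁, hA⟩ := hA V hV
  obtain ⟨F₂, hF₂, n₂, hn₂, hB⟩ := hB V hV
  refine ⟨F₁ ∪ F₂, hF₁.union hF₂, n₁ + n₂, by omega, ?_⟩
  calc A * B ⊆ ((F₁ ∪ F₂) * V) ^ n₁ * ((F₁ ∪ F₂) * V) ^ n₂ := by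
        gcongr
        · exact hA.trans (by gcongr; exact Set.subset_union_left)
        · exact hB.trans (by gcongr; exact Set.subset_union_right)
    _ = ((F₁ ∪ F₂) * V) ^ (n₁ + n₂) := (pow_add _ _ _).symm

lemma pow (hA : IsCBIn G A) : ∀ n : ℕ, IsCBIn G (A ^ n)
  | 0 => of_finite Set.finite_one
  | n + 1 => by rw [pow_succ]; exact (hA.pow n).mul hA

lemma smul (hA : IsCBIn G A) (g : G) : IsCBIn G (g • A) := by
  rw [← Set.singleton_smul, smul_eq_mul]
  exact (of_finite (Set.finite_singleton g)).mul hA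

end IsCBIn

lemma GroupSeminorm.continuous_of_eventually_eq_zero {G : Type*} [Group G] [TopologicalSpace G]
    [IsTopologicalGroup G] (f : GroupSeminorm G) (hf : ∀ᶠ g in 𝓝 1, f g = 0) : Continuous f := by
  refine continuous_iff_continuousAt.mpr fun x => EventuallyEq.continuousAt (y := f x) ?_
  rw [← map_mul_left_nhds_one x, EventuallyEq, eventually_map]
  filter_upwards [hf] with u hu
  refine le_antisymm ?_ ?_
  · simpa [hu] using map_mul_le_add f x u
  · simpa [hu, map_inv_eq_map] using map_mul_le_add f (x * u) u⁻¹

structure GroupFiltration (G : Type*) [Group G] where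
  level : ℕ → Set G
  monotone : Monotone level
  one_mem : (1 : G) ∈ level 0
  mul_subset : ∀ m n, level m * level n ⊆ level (m + n)
  inv_subset : ∀ n, (level n)⁻¹ ⊆ level n
  exhaustive : ∀ g, ∃ n, g ∈ level n

namespace GroupFiltration

variable {G : Type*} [Group G] (F : GroupFiltration G)

open Classical in
noncomputable def length (g : G) : ℕ := Nat.find (F.exhaustive g)

lemma length_le_iff {g : G} {n : ℕ} : F.length g ≤ n ↔ g ∈ F.level n := by
  classical
  rw [length, Nat.find_le_iff]
  exact ⟨fun ⟨m, hmn, hg⟩ => F.monotone hmn hg, fun hg => ⟨n, le_rfl, hg⟩⟩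

lemma mem_level_length (g : G) : g ∈ F.level (F.length g) := F.length_le_iff.mp le_rfl

lemma length_inv_le (g : G) : F.length g⁻¹ ≤ F.length g :=
  F.length_le_iff.mpr (F.inv_subset _ (Set.inv_mem_inv.mpr (F.mem_level_length g)))

noncomputable def seminorm : GroupSeminorm G where
  toFun g := F.length g
  map_one' := by simpa using F.length_le_iff.mpr F.one_mem
  mul_le' a b := by
    exact_mod_cast F.length_le_iff.mpr
      (F.mul_subset _ _ (Set.mul_mem_mul (F.mem_level_length a) (F.mem_level_length b)))
  inv' a := by
    exact_mod_cast le_antisymm (F.length_inv_le a) (by simpa using F.length_inv_le a⁻¹)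

@[simp]
lemma seminorm_apply (g : G) : F.seminorm g = F.length g := rfl

lemma setOf_seminorm_le {R : ℝ} (hR : 0 ≤ R) : {g | F.seminorm g ≤ R} = F.level ⌊R⌋₊ := by
  ext g
  simp only [Set.mem_ofPred_eq, seminorm_apply, ← Nat.le_floor_iff hR, length_le_iff]

lemma continuous_seminorm [TopologicalSpace G] [IsTopologicalGroup G] (hF : F.level 0 ∈ 𝓝 1) :
    Continuous F.seminorm :=
  F.seminorm.continuous_of_eventually_eq_zero <| by
    filter_upwards [hF] with g hg
    simpa using F.length_le_iff.mpr hg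

end GroupFiltration

section OpenSubgroup

variable {G : Type*} [Group G] (H : Subgroup G)

lemma Subgroup.coe_mul_pow_mul_coe (Y : Set G) (n : ℕ) :
    (H : Set G) * (Y * H) ^ n * H = H * (Y * H) ^ n := by
  cases n with
  | zero => simp [coe_mul_coe]
  | succ n => simp only [pow_succ, mul_assoc, coe_mul_coe]

lemma Subgroup.inv_coe_mul_pow {Y : Set G} (hY : Y⁻¹ = Y) (n : ℕ) :
    ((H : Set G) * (Y * H) ^ n)⁻¹ = H * (Y * H) ^ n := by
  rw [mul_inv_rev, ← inv_pow, mul_inv_rev, hY, inv_coe_set, mul_pow_mul]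

variable {Y : ℕ → Set G}

def GroupFiltration.ofSubgroup (hY : Monotone Y) (hY₁ : 1 ∈ Y 0) (hY_inv : ∀ n, (Y n)⁻¹ = Y n)
    (hY_cover : ∀ g, ∃ n, g ∈ Y n * H) : GroupFiltration G where
  level n := H * (Y n * H) ^ n
  monotone m n hmn := by
    have h₁ : (1 : G) ∈ Y n * H := Set.subset_mul_left _ H.one_mem (hY (Nat.zero_le n) hY₁)
    refine Set.mul_subset_mul_left ((Set.pow_subset_pow_left ?_).trans
      (Set.pow_subset_pow_right h₁ hmn))
    exact Set.mul_subset_mul_right (hY hmn)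
  one_mem := by simp
  mul_subset m n := by
    calc (H : Set G) * (Y m * H) ^ m * (H * (Y n * H) ^ n)
        = H * (Y m * H) ^ m * H * (Y n * H) ^ n := by simp only [mul_assoc]
      _ = H * (Y m * H) ^ m * (Y n * H) ^ n := by rw [Subgroup.coe_mul_pow_mul_coe]
      _ ⊆ H * (Y (m + n) * H) ^ m * (Y (m + n) * H) ^ n := by
        gcongr <;> apply hY <;> omega
      _ = H * (Y (m + n) * H) ^ (m + n) := by rw [pow_add, mul_assoc]
  inv_subset n := (H.inv_coe_mul_pow (hY_inv n) n).subset
  exhaustive g := by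
    obtain ⟨n, hg⟩ := hY_cover g
    have h₁ : (1 : G) ∈ Y (n + 1) * H := Set.subset_mul_left _ H.one_mem (hY (Nat.zero_le _) hY₁)
    refine ⟨n + 1, Set.subset_mul_right _ H.one_mem ?_⟩
    exact Set.subset_pow h₁ (Nat.succ_ne_zero n) (Set.mul_subset_mul_right (hY n.le_succ) hg)

end OpenSubgroup

lemma Subgroup.exists_finite_symmetric_cover {G : Type*} [Group G] [TopologicalSpace G]
    [ContinuousMul G] [TopologicalSpace.SeparableSpace G] {H : Subgroup G}
    (hH : IsOpen (H : Set G)) :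
    ∃ Y : ℕ → Set G, Monotone Y ∧ 1 ∈ Y 0 ∧ (∀ n, (Y n)⁻¹ = Y n) ∧ (∀ n, (Y n).Finite) ∧
      ∀ g, ∃ n, g ∈ Y n * H := by
  obtain ⟨x, hx⟩ := TopologicalSpace.exists_dense_seq G
  refine ⟨fun n => insert 1 (x '' Set.Iic n ∪ (x '' Set.Iic n)⁻¹), fun m n hmn => ?_,
    Set.mem_insert _ _, fun n => ?_, fun n => ?_, fun g => ?_⟩
  · have hx : x '' Set.Iic m ⊆ x '' Set.Iic n := Set.image_mono (Set.Iic_subset_Iic.mpr hmn)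
    exact Set.insert_subset_insert (Set.union_subset_union hx (Set.inv_subset_inv.mpr hx))
  · simp [Set.inv_insert, Set.union_comm]
  · exact (((Set.finite_Iic n).image x).union ((Set.finite_Iic n).image x).inv).insert 1
  · obtain ⟨n, h, hh, hxn⟩ := hx.exists_mem_open (hH.smul g) ⟨g, 1, H.one_mem, mul_one g⟩
    refine ⟨n, x n, Set.mem_insert_of_mem _ (Or.inl ⟨n, le_refl n, rfl⟩), h⁻¹, H.inv_mem hh, ?_⟩
    simp [← hxn]

theorem exists_coarsely_proper_pseudometric_general (G : Type*) [Group G] [TopologicalSpace G]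
    [IsTopologicalGroup G] [TopologicalSpace.SeparableSpace G]
    (hlocCB : ∃ V ∈ nhds (1 : G), IsCBIn G V)
    (hsmall : ∀ V ∈ nhds (1 : G), ∃ H : Subgroup G, IsOpen (H : Set G) ∧ (H : Set G) ⊆ V) :
    ∃ d : G → G → ℝ,
      (∀ g, d g g = 0) ∧
      (∀ g h, 0 ≤ d g h) ∧
      (∀ g h, d g h = d h g) ∧
      (∀ g h k, d g k ≤ d g h + d h k) ∧
      Continuous (Function.uncurry d) ∧
      (∀ k g h, d (k * g) (k * h) = d g h) ∧
      (∀ (g : G) (R : ℝ), 0 ≤ R → IsCBIn G {h | d g h ≤ R}) := by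
  obtain ⟨V, hV, hV_cb⟩ := hlocCB
  obtain ⟨H, hH_open, hHV⟩ := hsmall V hV
  obtain ⟨Y, hY, hY₁, hY_inv, hY_fin, hY_cover⟩ := Subgroup.exists_finite_symmetric_cover hH_open
  have hH_cb : IsCBIn G H := hV_cb.mono hHV
  let F := GroupFiltration.ofSubgroup H hY hY₁ hY_inv hY_cover
  have hF_nhds : F.level 0 ∈ 𝓝 1 := by
    simpa [F, GroupFiltration.ofSubgroup] using hH_open.mem_nhds H.one_mem
  have hF_cb (n : ℕ) : IsCBIn G (F.level n) :=
    hH_cb.mul (((IsCBIn.of_finite (hY_fin n)).mul hH_cb).pow n)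
  refine ⟨fun g h => F.seminorm (g⁻¹ * h), fun g => by simp, fun _ _ => apply_nonneg _ _,
    fun g h => by dsimp only; rw [← map_inv_eq_map, mul_inv_rev, inv_inv], fun g h k => ?_, ?_,
    fun k g h => by simp [mul_assoc], fun g R hR => ?_⟩
  · simpa [mul_assoc] using map_mul_le_add F.seminorm (g⁻¹ * h) (h⁻¹ * k)
  · exact (F.continuous_seminorm hF_nhds).comp (by fun_prop)
  · have hball : {h | F.seminorm (g⁻¹ * h) ≤ R} = g • F.level ⌊R⌋₊ := by
      ext h
      rw [Set.mem_smul_set_iff_inv_smul_mem, ← F.setOf_seminorm_le hR]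
      rfl
    exact hball ▸ (hF_cb _).smul g

/-- A separable, metrizable, locally coarsely bounded topological group with
arbitrarily small open subgroups admits a continuous, left-invariant, coarsely
proper pseudo-metric. -/
theorem exists_coarsely_proper_pseudometric (G : Type*) [Group G] [TopologicalSpace G]
    [IsTopologicalGroup G] [TopologicalSpace.SeparableSpace G]
    [TopologicalSpace.MetrizableSpace G]
    (hlocCB : ∃ V ∈ nhds (1 : G), IsCBIn G V)
    (hsmall : ∀ V ∈ nhds (1 : G), ∃ H : Subgroup G, IsOpen (H : Set G) ∧ (H : Set G) ⊆ V) :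
    ∃ d : G → G → ℝ,
      (∀ g, d g g = 0) ∧
      (∀ g h, 0 ≤ d g h) ∧
      (∀ g h, d g h = d h g) ∧
      (∀ g h k, d g k ≤ d g h + d h k) ∧
      Continuous (Function.uncurry d) ∧
      (∀ k g h, d (k * g) (k * h) = d g h) ∧
      (∀ (g : G) (R : ℝ), 0 ≤ R → IsCBIn G {h | d g h ≤ R}) :=
  exists_coarsely_proper_pseudometric_general G hlocCB hsmall
end

section
/- Let G be a topological group and let d, d' be two continuous, left-invariant pseudo-metrics on G, with d coarsely proper (every d-ball {h : d(g,h) ≤ R} is coarsely bounded in G). Then the identity map (G,d) → (G,d') is coarsely Lipschitz: there exists a nondecreasing function Φ : [0,∞) → [0,∞) such that d'(g,h) ≤ Φ(d(g,h)) for all g, h ∈ G. -/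
/-!
Left invariance reduces both pseudo-metrics to the length functions `d 1 ·` and `d' 1 ·`, and
the triangle inequality makes `d' 1 ·` subadditive. A continuous subadditive function is
bounded on some neighbourhood `V` of `1` and on every finite `F`, hence on every `(F * V) ^ n`,
hence on every coarsely bounded set; by coarse properness this covers every `d`-ball. The
supremum of `d' 1 ·` over the `d`-ball of radius `R` is then the required monotone `Φ`.
-/

open Pointwise

section Subadditive

variable {G : Type*} {ℓ : G → ℝ}

theorem bddAbove_image_mul [Mul G] (hmul : ∀ a b, ℓ (a * b) ≤ ℓ a + ℓ b) {S T : Set G}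
    (hS : BddAbove (ℓ '' S)) (hT : BddAbove (ℓ '' T)) : BddAbove (ℓ '' (S * T)) := by
  obtain ⟨C, hC⟩ := hS
  obtain ⟨D, hD⟩ := hT
  refine ⟨C + D, ?_⟩
  rintro _ ⟨_, ⟨a, ha, b, hb, rfl⟩, rfl⟩
  exact (hmul a b).trans (add_le_add (hC ⟨a, ha, rfl⟩) (hD ⟨b, hb, rfl⟩))

theorem bddAbove_image_pow [Monoid G] (hmul : ∀ a b, ℓ (a * b) ≤ ℓ a + ℓ b) {S : Set G}
    (hS : BddAbove (ℓ '' S)) (n : ℕ) : BddAbove (ℓ '' (S ^ n)) := by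
  induction n with
  | zero => simp
  | succ n ih => simpa only [pow_succ] using bddAbove_image_mul hmul ih hS

theorem IsCBIn.bddAbove_image [Group G] [TopologicalSpace G] {A : Set G} (hA : IsCBIn G A)
    (hcont : ContinuousAt ℓ 1) (hmul : ∀ a b, ℓ (a * b) ≤ ℓ a + ℓ b) :
    BddAbove (ℓ '' A) := by
  set V := ℓ ⁻¹' Set.Iio (ℓ 1 + 1)
  have hV : V ∈ nhds (1 : G) := hcont.preimage_mem_nhds (Iio_mem_nhds (lt_add_one _))
  obtain ⟨F, hF, n, -, hAF⟩ := hA V hV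
  have hFV : BddAbove (ℓ '' (F * V)) :=
    bddAbove_image_mul hmul (hF.image ℓ).bddAbove
      ⟨ℓ 1 + 1, by rintro _ ⟨v, hv, rfl⟩; exact le_of_lt hv⟩
  exact (bddAbove_image_pow hmul hFV n).mono (Set.image_mono hAF)

end Subadditive

section LeftInvariant

variable {G : Type*} {d : G → G → ℝ}

theorem dist_one_mul_le [Monoid G] (hinv : ∀ k g h, d (k * g) (k * h) = d g h)
    (htri : ∀ g h k, d g k ≤ d g h + d h k) (a b : G) : d 1 (a * b) ≤ d 1 a + d 1 b := by
  calc d 1 (a * b) ≤ d 1 a + d a (a * b) := htri _ _ _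
    _ = d 1 a + d 1 b := by rw [← hinv a 1 b, mul_one]

theorem dist_eq_dist_one_inv_mul [Group G] (hinv : ∀ k g h, d (k * g) (k * h) = d g h)
    (g h : G) : d g h = d 1 (g⁻¹ * h) := by
  rw [← hinv g 1 (g⁻¹ * h), mul_one, mul_inv_cancel_left]

end LeftInvariant

theorem exists_monotone_le_comp_of_bddAbove {α : Type*} (f r : α → ℝ)
    (hf : ∀ R, BddAbove (f '' {x | r x ≤ R})) :
    ∃ Φ : ℝ → ℝ, Monotone Φ ∧ ∀ x, f x ≤ Φ (r x) := by
  -- the `0` keeps the supremum over an empty ball from exceeding the ones over larger balls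
  set Φ : ℝ → ℝ := fun R => sSup (insert 0 (f '' {x | r x ≤ R}))
  have hbdd : ∀ R, BddAbove (insert 0 (f '' {x | r x ≤ R})) := fun R => (hf R).insert 0
  refine ⟨Φ, fun R R' hRR' => ?_, fun x => ?_⟩
  · refine csSup_le_csSup (hbdd R') (Set.insert_nonempty _ _) (Set.insert_subset_insert ?_)
    exact Set.image_mono fun x (hx : r x ≤ R) => hx.trans hRR'
  · exact le_csSup (hbdd _) (Set.mem_insert_of_mem _ ⟨x, le_refl (r x), rfl⟩)

theorem coarselyLipschitz_of_coarselyProper_general {G : Type*} [Group G] [TopologicalSpace G]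
    (d d' : G → G → ℝ)
    (hd'tri : ∀ g h k, d' g k ≤ d' g h + d' h k)
    (hd'cont : Continuous (Function.uncurry d'))
    (hdinv : ∀ k g h, d (k * g) (k * h) = d g h)
    (hd'inv : ∀ k g h, d' (k * g) (k * h) = d' g h)
    (hproper : ∀ (g : G) (R : ℝ), IsCBIn G {h | d g h ≤ R}) :
    ∃ Φ : ℝ → ℝ, Monotone Φ ∧ ∀ g h, d' g h ≤ Φ (d g h) := by
  have hballs : ∀ R, BddAbove (d' 1 '' {h | d 1 h ≤ R}) := fun R =>
    (hproper 1 R).bddAbove_image (hd'cont.uncurry_left 1).continuousAt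
      (dist_one_mul_le hd'inv hd'tri)
  obtain ⟨Φ, hΦ, hle⟩ := exists_monotone_le_comp_of_bddAbove (d' 1) (d 1) hballs
  refine ⟨Φ, hΦ, fun g h => ?_⟩
  rw [dist_eq_dist_one_inv_mul hd'inv, dist_eq_dist_one_inv_mul hdinv]
  exact hle _

/-- If `d, d'` are continuous left-invariant pseudo-metrics on a topological group `G`
and `d` is coarsely proper, then the identity map `(G,d) → (G,d')` is coarsely
Lipschitz: there is a nondecreasing `Φ` with `d'(g,h) ≤ Φ(d(g,h))` for all `g, h`. -/
theorem coarselyLipschitz_of_coarselyProper {G : Type*} [Group G] [TopologicalSpace G]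
    [IsTopologicalGroup G] (d d' : G → G → ℝ)
    (hd0 : ∀ g, d g g = 0) (hdnn : ∀ g h, 0 ≤ d g h)
    (hdsymm : ∀ g h, d g h = d h g) (hdtri : ∀ g h k, d g k ≤ d g h + d h k)
    (hd'0 : ∀ g, d' g g = 0) (hd'nn : ∀ g h, 0 ≤ d' g h)
    (hd'symm : ∀ g h, d' g h = d' h g) (hd'tri : ∀ g h k, d' g k ≤ d' g h + d' h k)
    (hdcont : Continuous (Function.uncurry d))
    (hd'cont : Continuous (Function.uncurry d'))
    (hdinv : ∀ k g h, d (k * g) (k * h) = d g h)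
    (hd'inv : ∀ k g h, d' (k * g) (k * h) = d' g h)
    (hproper : ∀ (g : G) (R : ℝ), IsCBIn G {h | d g h ≤ R}) :
    ∃ Φ : ℝ → ℝ, Monotone Φ ∧ ∀ g h, d' g h ≤ Φ (d g h) :=
  coarselyLipschitz_of_coarselyProper_general d d' hd'tri hd'cont hdinv hd'inv hproper
end

section
/- Let F be the free group on a countably infinite set of generators. Consider the graph 𝒯 whose vertices are pairs (n, f) where n ≥ 1 is an integer and f : ℕ → F is a function with f(i) = 1 for all i < n and with finite support (f(i) ≠ 1 for only finitely many i), and where two vertices (n, f) and (m, g) are joined by an edge if and only if |n − m| = 1 and f(i) = g(i) for all i ≥ max(n, m). Then 𝒯 is a tree: it is connected and contains no cycles. -/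
/-!
Order the vertices by height `n`. Adjacent vertices have different heights, and `(n, f)` has
exactly one higher neighbour, its parent `(n + 1, f')` with `f'` the function `f` with its
value at `n` erased. So a lowest vertex of a cycle would have two distinct higher neighbours,
which rules out cycles; and climbing from `(n, f)` through parents past the support of `f`
reaches `(N, 1)` for every large `N`, which gives connectedness.
-/

/-- Vertices of the combinatorial model: pairs `(n, f)` where `n ≥ 1` and
`f : ℕ → F` (with `F` the free group on countably many generators) satisfies
`f i = 1` for all `i < n` and has finite support. -/
def ModelVertex : Type :=
  { p : ℕ × (ℕ → FreeGroup ℕ) //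
    1 ≤ p.1 ∧ (∀ i < p.1, p.2 i = 1) ∧ {i | p.2 i ≠ 1}.Finite }

/-- The combinatorial model graph: `(n, f)` and `(m, g)` are adjacent iff
`|n − m| = 1` and `f i = g i` for all `i ≥ max n m`. -/
def modelGraph : SimpleGraph ModelVertex where
  Adj v w :=
    (v.1.1 = w.1.1 + 1 ∨ w.1.1 = v.1.1 + 1) ∧
    ∀ i, max v.1.1 w.1.1 ≤ i → v.1.2 i = w.1.2 i
  symm := by
    constructor
    intro v w h
    exact ⟨h.1.symm, fun i hi => (h.2 i ((max_comm v.1.1 w.1.1).trans_le hi)).symm⟩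
  loopless := by
    constructor
    intro v h
    rcases h.1 with h1 | h1 <;> omega

namespace SimpleGraph

variable {V α : Type*} [LinearOrder α] {G : SimpleGraph V}

theorem isAcyclic_of_subsingleton_higher_neighbors (h : V → α)
    (hne : ∀ ⦃v w⦄, G.Adj v w → h v ≠ h w)
    (hsub : ∀ v, {w | G.Adj v w ∧ h v < h w}.Subsingleton) : G.IsAcyclic := by
  classical
  intro v c hc
  obtain ⟨m, hm, hmin⟩ := Set.exists_min_image {x | x ∈ c.support} h
    c.support.finite_toSet ⟨v, c.start_mem_support⟩
  have hc' := hc.rotate hm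
  have higher {w} (hw : w ∈ (c.rotate m hm).support) (hadj : G.Adj m w) :
      w ∈ {w | G.Adj m w ∧ h m < h w} :=
    ⟨hadj, (hmin w ((c.mem_support_rotate_iff m hm).mp hw)).lt_of_ne (hne hadj)⟩
  exact hc'.snd_ne_penultimate <| hsub m
    (higher (Walk.getVert_mem_support _ _) (Walk.adj_snd hc'.not_nil))
    (higher (Walk.getVert_mem_support _ _) (Walk.adj_penultimate hc'.not_nil).symm)

end SimpleGraph

namespace ModelVertex

open Filter

theorem ext {v w : ModelVertex} (hn : v.1.1 = w.1.1) (hf : ∀ i, v.1.2 i = w.1.2 i) : v = w :=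
  Subtype.ext (Prod.ext hn (funext hf))

def parent (v : ModelVertex) : ModelVertex :=
  ⟨(v.1.1 + 1, fun i => if i ≤ v.1.1 then 1 else v.1.2 i),
    by omega, fun i hi => if_pos (by omega),
    v.2.2.2.subset fun i hi h => hi (by simp only [h, ite_self])⟩

def top (N : ℕ) (hN : 1 ≤ N) : ModelVertex :=
  ⟨(N, 1), hN, fun _ _ => rfl, by simp⟩

theorem adj_parent (v : ModelVertex) : modelGraph.Adj v v.parent :=
  ⟨Or.inr rfl, fun i hi => by
    simp only [parent] at hi ⊢
    rw [if_neg (by omega)]⟩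

theorem eq_parent_of_adj_of_lt {v w : ModelVertex} (h : modelGraph.Adj v w)
    (hlt : v.1.1 < w.1.1) : w = v.parent := by
  have hw : w.1.1 = v.1.1 + 1 := by rcases h.1 with h | h <;> omega
  refine ext hw fun i => ?_
  simp only [parent]
  split_ifs with hi
  · exact w.2.2.1 i (by omega)
  · exact (h.2 i (by omega)).symm

theorem reachable_top {N : ℕ} (hN : 1 ≤ N) (v : ModelVertex) (hvN : v.1.1 ≤ N)
    (hf : ∀ i, N ≤ i → v.1.2 i = 1) : modelGraph.Reachable v (top N hN) := by
  induction hd : N - v.1.1 generalizing v with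
  | zero =>
    have : v = top N hN := ext (by simp only [top]; omega) fun i => by
      rcases lt_or_ge i N with hi | hi
      · exact v.2.2.1 i (by omega)
      · exact hf i hi
    exact this ▸ .rfl
  | succ d ih =>
    refine v.adj_parent.reachable.trans (ih v.parent (by simp only [parent]; omega)
      (fun i hi => ?_) (by simp only [parent]; omega))
    simp only [parent]
    split_ifs
    · rfl
    · exact hf i hi

theorem eventually_reachable_top (v : ModelVertex) :
    ∀ᶠ N in atTop, ∃ hN : 1 ≤ N, modelGraph.Reachable v (top N hN) := by
  have hf : ∀ᶠ N in atTop, ∀ i, N ≤ i → v.1.2 i = 1 :=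
    eventually_forall_ge_atTop.mpr <| Nat.cofinite_eq_atTop ▸ eventually_cofinite.mpr <| by
      simpa only [not_not] using v.2.2.2
  filter_upwards [hf, eventually_ge_atTop v.1.1] with N hf hvN
  exact ⟨v.2.1.trans hvN, reachable_top _ v hvN hf⟩

end ModelVertex

/-- The combinatorial model graph is a tree: connected and acyclic. -/
theorem modelGraph_isTree : modelGraph.IsTree := by
  have : Nonempty ModelVertex := ⟨ModelVertex.top 1 le_rfl⟩
  have preconnected : modelGraph.Preconnected := fun u v => by
    obtain ⟨N, ⟨_, hu⟩, ⟨_, hv⟩⟩ :=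
      (u.eventually_reachable_top.and v.eventually_reachable_top).exists
    exact hu.trans hv.symm
  refine ⟨⟨preconnected⟩, SimpleGraph.isAcyclic_of_subsingleton_higher_neighbors (·.1.1)
    (fun v w h => by rcases h.1 with h | h <;> omega) fun v w hw w' hw' => ?_⟩
  exact (ModelVertex.eq_parent_of_adj_of_lt hw.1 hw.2).trans
    (ModelVertex.eq_parent_of_adj_of_lt hw'.1 hw'.2).symm
end

section
/- Let G be a topological group admitting a continuous unbounded ultranorm, i.e., a continuous function ℓ : G → [0,∞) with ℓ(1) = 0, ℓ(g⁻¹) = ℓ(g), ℓ(gh) ≤ max(ℓ(g), ℓ(h)) for all g,h ∈ G, and with ℓ unbounded on G. Then G is not coarsely bounded, and moreover no coarsely bounded subset of G generates G as a group, nor even generates a dense subgroup of G. -/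
/-!
For an ultranorm `ℓ` and `M ≥ ℓ 1` the sublevel set `{g | ℓ g ≤ M}` is a closed subgroup, and a
neighbourhood of `1` when `M > ℓ 1`. Taking `V = {ℓ ≤ ℓ 1 + 1}` in the definition, a coarsely
bounded set lies in `(F·V)ⁿ` with `F` finite, hence in the sublevel subgroup of level
`max (max ℓ(F)) (ℓ 1 + 1)`; being closed, that subgroup also contains the closure of the subgroup
generated by the set, and it is proper because `ℓ` is unbounded.
-/

open Pointwise

open Topology

section

variable {G : Type*} [Group G]

theorem IsCBIn.exists_finite_subset_closure_sup [TopologicalSpace G] {A : Set G}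
    (hA : IsCBIn G A) (H : Subgroup G) (hH : (H : Set G) ∈ 𝓝 1) :
    ∃ F : Set G, F.Finite ∧ A ⊆ (Subgroup.closure F ⊔ H : Subgroup G) := by
  obtain ⟨F, hF, n, -, hsub⟩ := hA _ hH
  refine ⟨F, hF, hsub.trans (Subgroup.pow_subset (Subgroup.mul_subset ?_ ?_))⟩
  · exact Subgroup.subset_closure.trans (SetLike.coe_subset_coe.2 le_sup_left)
  · exact SetLike.coe_subset_coe.2 le_sup_right

variable {ℓ : G → ℝ}

def sublevelSubgroup (hinv : ∀ g, ℓ g⁻¹ = ℓ g) (hultra : ∀ g h, ℓ (g * h) ≤ max (ℓ g) (ℓ h))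
    {M : ℝ} (hM : ℓ 1 ≤ M) : Subgroup G where
  carrier := {g | ℓ g ≤ M}
  one_mem' := hM
  mul_mem' {g h} hg hh := (hultra g h).trans (max_le hg hh)
  inv_mem' {g} hg := (hinv g).trans_le hg

variable (hinv : ∀ g, ℓ g⁻¹ = ℓ g) (hultra : ∀ g h, ℓ (g * h) ≤ max (ℓ g) (ℓ h))

theorem mem_sublevelSubgroup {M : ℝ} (hM : ℓ 1 ≤ M) {g : G} :
    g ∈ sublevelSubgroup hinv hultra hM ↔ ℓ g ≤ M :=
  Iff.rfl

variable [TopologicalSpace G]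

theorem isClosed_sublevelSubgroup (hcont : Continuous ℓ) {M : ℝ} (hM : ℓ 1 ≤ M) :
    IsClosed (sublevelSubgroup hinv hultra hM : Set G) :=
  isClosed_le hcont continuous_const

theorem sublevelSubgroup_mem_nhds_one (hcont : Continuous ℓ) {M : ℝ} (hM : ℓ 1 < M) :
    (sublevelSubgroup hinv hultra hM.le : Set G) ∈ 𝓝 1 :=
  hcont.continuousAt.preimage_mem_nhds (Iic_mem_nhds hM)

theorem IsCBIn.exists_subset_sublevelSubgroup (hcont : Continuous ℓ) {A : Set G}
    (hA : IsCBIn G A) :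
    ∃ M, ∃ hM : ℓ 1 ≤ M, A ⊆ sublevelSubgroup hinv hultra hM := by
  obtain ⟨F, hF, hAF⟩ := hA.exists_finite_subset_closure_sup _
    (sublevelSubgroup_mem_nhds_one hinv hultra hcont (lt_add_one (ℓ 1)))
  obtain ⟨MF, hMF⟩ := (hF.image ℓ).bddAbove
  have hM : ℓ 1 ≤ max MF (ℓ 1 + 1) := le_max_of_le_right (by linarith)
  refine ⟨_, hM, hAF.trans (SetLike.coe_subset_coe.2 (sup_le ?_ fun g hg ↦ ?_))⟩
  · exact (Subgroup.closure_le _).2 fun f hf ↦ le_max_of_le_left (hMF ⟨f, hf, rfl⟩)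
  · exact le_max_of_le_right ((mem_sublevelSubgroup hinv hultra _).1 hg)

theorem IsCBIn.not_dense_closure_of_unbounded (hinv : ∀ g, ℓ g⁻¹ = ℓ g)
    (hultra : ∀ g h, ℓ (g * h) ≤ max (ℓ g) (ℓ h)) (hcont : Continuous ℓ)
    (hunbounded : ∀ M : ℝ, ∃ g : G, M < ℓ g) {A : Set G} (hA : IsCBIn G A) :
    ¬ Dense ((Subgroup.closure A : Subgroup G) : Set G) := by
  intro hdense
  obtain ⟨M, hM, hAM⟩ := hA.exists_subset_sublevelSubgroup hinv hultra hcont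
  obtain ⟨g, hg⟩ := hunbounded M
  have hclosure : closure (Subgroup.closure A : Set G) ⊆ sublevelSubgroup hinv hultra hM :=
    (isClosed_sublevelSubgroup hinv hultra hcont hM).closure_subset_iff.2
      (Subgroup.closure_le _ |>.2 hAM)
  exact hg.not_ge (hclosure (hdense.closure_eq ▸ Set.mem_univ g))

end

theorem not_cb_of_unbounded_ultranorm_general {G : Type*} [Group G] [TopologicalSpace G]
    (ℓ : G → ℝ)
    (hcont : Continuous ℓ)
    (hinv : ∀ g, ℓ g⁻¹ = ℓ g) (hultra : ∀ g h, ℓ (g * h) ≤ max (ℓ g) (ℓ h))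
    (hunbounded : ∀ M : ℝ, ∃ g : G, M < ℓ g) :
    ¬ IsCBIn G (Set.univ : Set G) ∧
    ∀ A : Set G, IsCBIn G A →
      Subgroup.closure A ≠ ⊤ ∧ ¬ Dense ((Subgroup.closure A : Subgroup G) : Set G) := by
  have hnotDense {A : Set G} (hA : IsCBIn G A) :=
    hA.not_dense_closure_of_unbounded hinv hultra hcont hunbounded
  refine ⟨fun huniv ↦ hnotDense huniv ?_, fun A hA ↦ ⟨fun htop ↦ hnotDense hA ?_, hnotDense hA⟩⟩
  · simp [dense_univ]
  · simp [htop, dense_univ]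

/-- If a topological group `G` admits a continuous unbounded ultranorm, then `G` is
not coarsely bounded, and no coarsely bounded subset of `G` generates `G` as a
group, nor even generates a dense subgroup of `G`. -/
theorem not_cb_of_unbounded_ultranorm {G : Type*} [Group G] [TopologicalSpace G]
    [IsTopologicalGroup G] (ℓ : G → ℝ)
    (hcont : Continuous ℓ) (hnonneg : ∀ g, 0 ≤ ℓ g) (hone : ℓ 1 = 0)
    (hinv : ∀ g, ℓ g⁻¹ = ℓ g) (hultra : ∀ g h, ℓ (g * h) ≤ max (ℓ g) (ℓ h))
    (hunbounded : ∀ M : ℝ, ∃ g : G, M < ℓ g) :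
    ¬ IsCBIn G (Set.univ : Set G) ∧
    ∀ A : Set G, IsCBIn G A →
      Subgroup.closure A ≠ ⊤ ∧ ¬ Dense ((Subgroup.closure A : Subgroup G) : Set G) :=
  not_cb_of_unbounded_ultranorm_general ℓ hcont hinv hultra hunbounded
end

section
/- Let F be the free group on generators a₀, a₁, a₂, …, and let φ : F → F be the endomorphism determined by φ(a₀) = a₀ and φ(a_{i+1}) = a_i · a_{i+1} for every i ≥ 0. Then φ is an automorphism of F, and for every i ≥ 0 the reduced word representing φ⁻¹(a_i) contains an occurrence of the letter a₀ or a₀⁻¹. -/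
/-! The inverse is forced on generators: `φ⁻¹(a₀) = a₀` and `φ⁻¹(a_{i+1}) = φ⁻¹(a_i)⁻¹ · a_{i+1}`.
By induction, the exponent sum of `a₀` in `φ⁻¹(a_i)` is `(-1)^i ≠ 0`, and the exponent sum
of a letter vanishes on every reduced word in which that letter does not occur. -/

namespace FreeGroup

variable {α : Type*} [DecidableEq α]

theorem lift_eq_one_of_forall_mem_toWord {G : Type*} [Group G] {f : α → G} {g : FreeGroup α}
    (h : ∀ p ∈ g.toWord, f p.1 = 1) : lift f g = 1 := by
  rw [← mk_toWord (x := g), lift_mk]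
  refine List.prod_eq_one fun y hy => ?_
  obtain ⟨⟨a, b⟩, hmem, rfl⟩ := List.mem_map.1 hy
  cases b <;> simp [h _ hmem]

def exponentSum (x : α) : FreeGroup α →* Multiplicative ℤ :=
  lift (Pi.mulSingle x (Multiplicative.ofAdd 1))

theorem exists_mem_toWord_of_exponentSum_ne_one {x : α} {g : FreeGroup α}
    (h : exponentSum x g ≠ 1) : ∃ b : Bool, (x, b) ∈ g.toWord := by
  by_contra! hx
  refine h (lift_eq_one_of_forall_mem_toWord fun ⟨a, b⟩ hmem => ?_)
  exact Pi.mulSingle_eq_of_ne (fun (ha : a = x) => hx b (ha ▸ hmem)) _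

end FreeGroup

open FreeGroup

def inverseImageOfGen : ℕ → FreeGroup ℕ
  | 0 => of 0
  | i + 1 => (inverseImageOfGen i)⁻¹ * of (i + 1)

theorem exponentSum_zero_inverseImageOfGen (i : ℕ) :
    exponentSum 0 (inverseImageOfGen i) = Multiplicative.ofAdd ((-1) ^ i) := by
  induction i with
  | zero => simp [inverseImageOfGen, exponentSum]
  | succ n ih =>
    rw [inverseImageOfGen, _root_.map_mul, _root_.map_inv, ih]
    simp [exponentSum, pow_succ]

theorem map_inverseImageOfGen {φ : FreeGroup ℕ →* FreeGroup ℕ} (h0 : φ (of 0) = of 0)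
    (hsucc : ∀ i : ℕ, φ (of (i + 1)) = of i * of (i + 1)) (i : ℕ) :
    φ (inverseImageOfGen i) = of i := by
  induction i with
  | zero => exact h0
  | succ n ih => simp [inverseImageOfGen, ih, hsucc n]

theorem comp_lift_inverseImageOfGen {φ : FreeGroup ℕ →* FreeGroup ℕ} (h0 : φ (of 0) = of 0)
    (hsucc : ∀ i : ℕ, φ (of (i + 1)) = of i * of (i + 1)) :
    φ.comp (lift inverseImageOfGen) = MonoidHom.id _ :=
  ext_hom _ _ fun i => by simp [map_inverseImageOfGen h0 hsucc]

theorem lift_inverseImageOfGen_comp {φ : FreeGroup ℕ →* FreeGroup ℕ} (h0 : φ (of 0) = of 0)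
    (hsucc : ∀ i : ℕ, φ (of (i + 1)) = of i * of (i + 1)) :
    (lift inverseImageOfGen).comp φ = MonoidHom.id _ :=
  ext_hom _ _ fun
    | 0 => by simp [h0, inverseImageOfGen]
    | n + 1 => by simp [hsucc n, inverseImageOfGen]

/-- Let `F` be the free group on generators `a₀, a₁, a₂, …` and `φ : F → F` the
endomorphism with `φ(a₀) = a₀` and `φ(a_{i+1}) = a_i · a_{i+1}`.  Then `φ` is an
automorphism of `F`, and for every `i` the reduced word representing `φ⁻¹(a_i)`
contains an occurrence of the letter `a₀` or `a₀⁻¹`. -/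
theorem freeGroup_auto_inverse_hits_a0 (φ : FreeGroup ℕ →* FreeGroup ℕ)
    (h0 : φ (FreeGroup.of 0) = FreeGroup.of 0)
    (hsucc : ∀ i : ℕ, φ (FreeGroup.of (i + 1)) = FreeGroup.of i * FreeGroup.of (i + 1)) :
    Function.Bijective φ ∧
    ∃ ψ : FreeGroup ℕ →* FreeGroup ℕ,
      (∀ x, ψ (φ x) = x) ∧ (∀ x, φ (ψ x) = x) ∧
      ∀ i : ℕ, ∃ b : Bool, ((0 : ℕ), b) ∈ (ψ (FreeGroup.of i)).toWord := by
  have hleft : Function.LeftInverse (lift inverseImageOfGen) φ :=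
    DFunLike.congr_fun (lift_inverseImageOfGen_comp h0 hsucc)
  have hright : Function.RightInverse (lift inverseImageOfGen) φ :=
    DFunLike.congr_fun (comp_lift_inverseImageOfGen h0 hsucc)
  refine ⟨⟨hleft.injective, hright.surjective⟩, lift inverseImageOfGen, hleft, hright,
    fun i => ?_⟩
  rw [lift_apply_of]
  apply exists_mem_toWord_of_exponentSum_ne_one
  simp [exponentSum_zero_inverseImageOfGen]
end
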